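/- arXiv:1509.07619 — 9 statements merged into one kernel-verified Lean document; each statement's English description precedes it below -/
import Mathlib

section
/- Let u_L, u_R, τ ∈ ℝ² with u_L and τ linearly independent, and let a_L, a_R, b be real numbers with a_L·a_R ≠ 0 satisfying a_R·u_L − a_L·u_R + b·τ = 0. Then for all real numbers x_L, x_R, y, the determinant of the 3×3 real matrix whose columns are (u_L; x_L), (u_R; x_R) and (τ; y) (each column a vector of ℝ³ obtained by appending the scalar to the vector of ℝ²) is zero if and only if a_R·x_L − a_L·x_R + b·y = 0. (This is the equivalence, central to Proposition 3.2, between the C¹ condition (3.1) expressed as a vanishing 3×3 determinant of the graph derivatives and the linear G¹ condition (3.14) on the function data.) -/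
/-- The equivalence, central to Proposition 3.2, between the vanishing of the 3×3
determinant of the graph derivatives and the linear G¹ condition on the function data. -/
theorem stmt7 (uL uR τ : Fin 2 → ℝ) (hind : LinearIndependent ℝ ![uL, τ])
    (aL aR b : ℝ) (ha : aL * aR ≠ 0)
    (hrel : aR • uL - aL • uR + b • τ = 0) :
    ∀ xL xR y : ℝ,
      (Matrix.det !![uL 0, uR 0, τ 0; uL 1, uR 1, τ 1; xL, xR, y] = 0 ↔
        aR * xL - aL * xR + b * y = 0) := by
  have haL : aL ≠ 0 := fun h => ha (by rw [h, zero_mul])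
  rw [LinearIndependent.pair_iff] at hind
  have h0 := congrFun hrel 0
  have h1 := congrFun hrel 1
  simp [Pi.smul_apply, smul_eq_mul] at h0 h1
  have hΔ : uL 0 * τ 1 - τ 0 * uL 1 ≠ 0 := by
    intro h
    have key := hind (τ 1) (-(uL 1)) (by
      funext i
      fin_cases i <;> simp [Pi.smul_apply, smul_eq_mul] <;> nlinarith [h])
    have key2 := hind (τ 0) (-(uL 0)) (by
      funext i
      fin_cases i <;> simp [Pi.smul_apply, smul_eq_mul] <;> nlinarith [key.1, key.2])
    have := hind 1 0 (by
      funext i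
      fin_cases i <;> simp [Pi.smul_apply, smul_eq_mul] <;> nlinarith [key.1, key.2, key2.1, key2.2])
    exact one_ne_zero this.1
  intro xL xR y
  have hdet : Matrix.det !![uL 0, uR 0, τ 0; uL 1, uR 1, τ 1; xL, xR, y] * aL
      = (uL 0 * τ 1 - τ 0 * uL 1) * (aR * xL - aL * xR + b * y) := by
    simp [Matrix.det_fin_three]
    linear_combination (uL 1 * y - τ 1 * xL) * h0 + (τ 0 * xL - uL 0 * y) * h1
  constructor
  · intro h
    have : (uL 0 * τ 1 - τ 0 * uL 1) * (aR * xL - aL * xR + b * y) = 0 := by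
      rw [← hdet, h, zero_mul]
    rcases mul_eq_zero.mp this with h' | h'
    · exact absurd h' hΔ
    · exact h'
  · intro h
    have : Matrix.det !![uL 0, uR 0, τ 0; uL 1, uR 1, τ 1; xL, xR, y] * aL = 0 := by
      rw [hdet, h, mul_zero]
    rcases mul_eq_zero.mp this with h' | h'
    · exact h'
    · exact absurd h' haL
end

section
/- Let F_L, F_R : ℝ² → ℝ² be bilinear maps, i.e., F_S(u,v) = c^S₀₀ + c^S₁₀·u + c^S₀₁·v + c^S₁₁·uv with coefficient vectors c^S_{ij} ∈ ℝ², for S ∈ {L,R}. Assume F_L(0,v) = F_R(0,v) for all v ∈ ℝ (equivalently c^L₀₀ = c^R₀₀ and c^L₀₁ = c^R₀₁ =: c₂) and c₂ ≠ 0. For S ∈ {L,R}, let u_S(v) = c^S₁₀ + c^S₁₁·v (which equals the partial derivative ∂_u F_S(0,v)), and define α_S(v) = det[u_S(v), c₂] and β_S(v) = (u_S(v) · c₂)/‖c₂‖². Then α_L, α_R, β_L, β_R are polynomial functions of v of degree at most 1, and for all v ∈ ℝ: α_R(v)·u_L(v) − α_L(v)·u_R(v) + (α_L(v)·β_R(v)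 − α_R(v)·β_L(v))·c₂ = 0. (This is the first part of Proposition 4.1: bilinear two-patch parametrizations are analysis-suitable G¹-continuous.) -/
/-!
Both `det2 · c` and `dot2 · c` are linear, so `α_S` and `β_S` are affine in `v` because `u_S` is.
The identity is plane linear algebra: in the orthogonal basis `c, c⊥` with `c⊥ = (c₁, -c₀)`,
every `a` satisfies `‖c‖² a = (a · c) c + det[a, c] c⊥`, and the `c⊥`-components cancel in
`det[b, c] a - det[a, c] b`.
-/

/-- `det[a,b] := a₁b₂ − a₂b₁` for vectors `a, b` in ℝ². -/
def det2 (a b : Fin 2 → ℝ) : ℝ := a 0 * b 1 - a 1 * b 0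

/-- Euclidean inner product on ℝ². -/
def dot2 (a b : Fin 2 → ℝ) : ℝ := a 0 * b 0 + a 1 * b 1

lemma det2_add_smul_left (a b c : Fin 2 → ℝ) (t : ℝ) :
    det2 (a + t • b) c = det2 a c + t * det2 b c := by
  simp only [det2, Pi.add_apply, Pi.smul_apply, smul_eq_mul]
  ring

lemma dot2_add_smul_left (a b c : Fin 2 → ℝ) (t : ℝ) :
    dot2 (a + t • b) c = dot2 a c + t * dot2 b c := by
  simp only [dot2, Pi.add_apply, Pi.smul_apply, smul_eq_mul]
  ring

lemma det2_zero_right (a : Fin 2 → ℝ) : det2 a 0 = 0 := by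
  simp [det2]

lemma dot2_self_eq_zero {c : Fin 2 → ℝ} (h : dot2 c c = 0) : c = 0 := by
  have hsum : c 0 * c 0 + c 1 * c 1 = 0 := h
  have h0 : c 0 = 0 := by nlinarith [mul_self_nonneg (c 0), mul_self_nonneg (c 1)]
  have h1 : c 1 = 0 := by nlinarith [mul_self_nonneg (c 0), mul_self_nonneg (c 1)]
  ext i
  fin_cases i
  exacts [h0, h1]

lemma exists_affine_det2_add_smul (a b c : Fin 2 → ℝ) :
    ∃ x y : ℝ, ∀ v, det2 (a + v • b) c = x + y * v :=
  ⟨det2 a c, det2 b c, fun v => by rw [det2_add_smul_left, mul_comm]⟩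

lemma exists_affine_dot2_add_smul_div (a b c : Fin 2 → ℝ) (d : ℝ) :
    ∃ x y : ℝ, ∀ v, dot2 (a + v • b) c / d = x + y * v :=
  ⟨dot2 a c / d, dot2 b c / d, fun v => by rw [dot2_add_smul_left, add_div]; ring⟩

lemma dot2_self_smul_det2_smul_sub (a b c : Fin 2 → ℝ) :
    dot2 c c • (det2 b c • a - det2 a c • b) =
      (det2 b c * dot2 a c - det2 a c * dot2 b c) • c := by
  ext i
  fin_cases i <;>
  · simp only [det2, dot2, Pi.smul_apply, Pi.sub_apply, smul_eq_mul, Fin.zero_eta, Fin.mk_one]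
    ring

lemma det2_smul_sub_det2_smul_add_smul_eq_zero (a b c : Fin 2 → ℝ) :
    det2 b c • a - det2 a c • b +
      (det2 a c * (dot2 b c / dot2 c c) - det2 b c * (dot2 a c / dot2 c c)) • c = 0 := by
  by_cases hc : dot2 c c = 0
  -- then `c = 0`: every `det2 · c` vanishes, and the quotients are junk `x / 0 = 0`
  · simp [dot2_self_eq_zero hc, det2_zero_right]
  apply smul_right_injective (Fin 2 → ℝ) hc
  simp only [smul_add, dot2_self_smul_det2_smul_sub, smul_smul, smul_zero, ← add_smul]
  convert zero_smul ℝ c using 2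
  field_simp
  ring

theorem stmt8_general (cL10 cL11 cR10 cR11 : Fin 2 → ℝ)
    (c2 : Fin 2 → ℝ)
    (uL uR : ℝ → (Fin 2 → ℝ))
    (huL : ∀ v : ℝ, uL v = cL10 + v • cL11)
    (huR : ∀ v : ℝ, uR v = cR10 + v • cR11)
    (αL αR βL βR : ℝ → ℝ)
    (hαL : ∀ v : ℝ, αL v = det2 (uL v) c2)
    (hαR : ∀ v : ℝ, αR v = det2 (uR v) c2)
    (hβL : ∀ v : ℝ, βL v = dot2 (uL v) c2 / dot2 c2 c2)
    (hβR : ∀ v : ℝ, βR v = dot2 (uR v) c2 / dot2 c2 c2) :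
    ((∃ a b : ℝ, ∀ v, αL v = a + b * v) ∧ (∃ a b : ℝ, ∀ v, αR v = a + b * v) ∧
     (∃ a b : ℝ, ∀ v, βL v = a + b * v) ∧ (∃ a b : ℝ, ∀ v, βR v = a + b * v)) ∧
    (∀ v : ℝ,
      αR v • uL v - αL v • uR v + (αL v * βR v - αR v * βL v) • c2 = 0) := by
  refine ⟨⟨?_, ?_, ?_, ?_⟩, fun v => ?_⟩
  · simpa only [hαL, huL] using exists_affine_det2_add_smul cL10 cL11 c2
  · simpa only [hαR, huR] using exists_affine_det2_add_smul cR10 cR11 c2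
  · simpa only [hβL, huL] using exists_affine_dot2_add_smul_div cL10 cL11 c2 (dot2 c2 c2)
  · simpa only [hβR, huR] using exists_affine_dot2_add_smul_div cR10 cR11 c2 (dot2 c2 c2)
  · rw [hαL, hαR, hβL, hβR]
    exact det2_smul_sub_det2_smul_add_smul_eq_zero (uL v) (uR v) c2

/-- First part of Proposition 4.1: bilinear two-patch parametrizations are
analysis-suitable G¹-continuous, with gluing data `α_S = det[u_S, c₂]` and
`β_S = (u_S · c₂)/‖c₂‖²` (note `‖c₂‖² = c₂·c₂`) that are linear polynomials in `v`. -/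
theorem stmt8 (cL00 cL10 cL01 cL11 cR00 cR10 cR01 cR11 : Fin 2 → ℝ)
    (FL FR : ℝ → ℝ → (Fin 2 → ℝ))
    (hFL : ∀ u v : ℝ, FL u v = cL00 + u • cL10 + v • cL01 + (u * v) • cL11)
    (hFR : ∀ u v : ℝ, FR u v = cR00 + u • cR10 + v • cR01 + (u * v) • cR11)
    (hcomp : ∀ v : ℝ, FL 0 v = FR 0 v)
    (c2 : Fin 2 → ℝ) (hc2 : c2 = cL01) (hc2ne : c2 ≠ 0)
    (uL uR : ℝ → (Fin 2 → ℝ))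
    (huL : ∀ v : ℝ, uL v = cL10 + v • cL11)
    (huR : ∀ v : ℝ, uR v = cR10 + v • cR11)
    (αL αR βL βR : ℝ → ℝ)
    (hαL : ∀ v : ℝ, αL v = det2 (uL v) c2)
    (hαR : ∀ v : ℝ, αR v = det2 (uR v) c2)
    (hβL : ∀ v : ℝ, βL v = dot2 (uL v) c2 / dot2 c2 c2)
    (hβR : ∀ v : ℝ, βR v = dot2 (uR v) c2 / dot2 c2 c2) :
    ((∃ a b : ℝ, ∀ v, αL v = a + b * v) ∧ (∃ a b : ℝ, ∀ v, αR v = a + b * v) ∧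
     (∃ a b : ℝ, ∀ v, βL v = a + b * v) ∧ (∃ a b : ℝ, ∀ v, βR v = a + b * v)) ∧
    (∀ v : ℝ,
      αR v • uL v - αL v • uR v + (αL v * βR v - αR v * βL v) • c2 = 0) :=
  stmt8_general cL10 cL11 cR10 cR11 c2 uL uR huL huR αL αR βL βR hαL hαR hβL hβR
end

section
/- Let α_L, α_R be polynomial functions ℝ → ℝ of degree at most 1 with α_S(v) > 0 for all v ∈ [0,1], and let β_L, β_R be polynomial functions of degree at most 1. Then there exist bilinear maps F_L, F_R : ℝ² → ℝ² (each component of the form c₀₀ + c₁₀u + c₀₁v + c₁₁uv) such that F_L(0,v) = F_R(0,v) = (0,v) for all v, such that det[∂_u F_S(0,v), ∂_v F_S(0,v)] ≠ 0 for all v ∈ [0,1] and S ∈ {L,R}, and such that for all v ∈ [0,1]: α_R(v)·∂_u F_L(0,v) − α_L(v)·∂_u F_R(0,v) + (α_L(v)·β_R(v) − α_R(v)·β_L(v))·(0,1) = 0. (This is the second part of Proposition 4.1: any prescribed linear, positive α's and linear β's are realized by bilinear two-patch parametrizations.) -/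
def interfacePatch (α β : ℝ → ℝ) (u v : ℝ) : Fin 2 → ℝ :=
  v • ![0, 1] + u • ![α v, β v]

namespace interfacePatch

variable (α β : ℝ → ℝ)

theorem isBilinear {a b c d : ℝ} (hα : ∀ v, α v = a + b * v) (hβ : ∀ v, β v = c + d * v) :
    ∃ c00 c10 c01 c11 : Fin 2 → ℝ,
      ∀ u v : ℝ, interfacePatch α β u v = c00 + u • c10 + v • c01 + (u * v) • c11 :=
  ⟨0, ![a, c], ![0, 1], ![b, d], fun u v => by
    ext i
    fin_cases i <;> simp [interfacePatch, hα, hβ] <;> ring⟩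

@[simp]
theorem zero_left (v : ℝ) : interfacePatch α β 0 v = ![0, v] := by
  ext i
  fin_cases i <;> simp [interfacePatch]

theorem deriv_left (u v : ℝ) :
    deriv (fun u => interfacePatch α β u v) u = ![α v, β v] :=
  ((hasDerivAt_id u).smul_const _).const_add _ |>.deriv.trans (one_smul _ _)

theorem deriv_right_zero (v : ℝ) :
    deriv (fun w => interfacePatch α β 0 w) v = ![0, 1] := by
  have : (fun w => interfacePatch α β 0 w) = fun w => w • ![0, 1] := by
    ext w i
    fin_cases i <;> simp
  rw [this, deriv_smul_const differentiableAt_id, deriv_id'', one_smul]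

theorem det2_derivs (v : ℝ) :
    det2 (deriv (fun u => interfacePatch α β u v) 0) (deriv (fun w => interfacePatch α β 0 w) v)
      = α v := by
  rw [deriv_left, deriv_right_zero]
  simp [det2]

end interfacePatch

theorem smul_vec_sub_smul_vec_add_smul_e2 (a b c d : ℝ) :
    c • ![a, b] - a • ![c, d] + (a * d - c * b) • (![0, 1] : Fin 2 → ℝ) = 0 := by
  ext i
  fin_cases i <;> simp; ring

/-- Second part of Proposition 4.1: any prescribed linear, positive α's and linear β's are
realized by bilinear two-patch parametrizations `F_L, F_R` with common interface
`F_S(0,v) = (0,v)`, nonsingular along the interface, satisfying the G¹ gluing relation. -/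
theorem stmt9 (αL αR βL βR : ℝ → ℝ)
    (hαL : ∃ a b : ℝ, ∀ v, αL v = a + b * v)
    (hαR : ∃ a b : ℝ, ∀ v, αR v = a + b * v)
    (hβL : ∃ a b : ℝ, ∀ v, βL v = a + b * v)
    (hβR : ∃ a b : ℝ, ∀ v, βR v = a + b * v)
    (hposL : ∀ v ∈ Set.Icc (0 : ℝ) 1, 0 < αL v)
    (hposR : ∀ v ∈ Set.Icc (0 : ℝ) 1, 0 < αR v) :
    ∃ FL FR : ℝ → ℝ → (Fin 2 → ℝ),
      (∃ c00 c10 c01 c11 : Fin 2 → ℝ,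
        ∀ u v : ℝ, FL u v = c00 + u • c10 + v • c01 + (u * v) • c11) ∧
      (∃ c00 c10 c01 c11 : Fin 2 → ℝ,
        ∀ u v : ℝ, FR u v = c00 + u • c10 + v • c01 + (u * v) • c11) ∧
      (∀ v : ℝ, FL 0 v = ![0, v] ∧ FR 0 v = ![0, v]) ∧
      (∀ v ∈ Set.Icc (0 : ℝ) 1,
        det2 (deriv (fun u => FL u v) 0) (deriv (fun w => FL 0 w) v) ≠ 0 ∧
        det2 (deriv (fun u => FR u v) 0) (deriv (fun w => FR 0 w) v) ≠ 0 ∧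
        αR v • deriv (fun u => FL u v) 0 - αL v • deriv (fun u => FR u v) 0
          + (αL v * βR v - αR v * βL v) • (![0, 1] : Fin 2 → ℝ) = 0) := by
  obtain ⟨_, _, hαL⟩ := hαL
  obtain ⟨_, _, hαR⟩ := hαR
  obtain ⟨_, _, hβL⟩ := hβL
  obtain ⟨_, _, hβR⟩ := hβR
  refine ⟨interfacePatch αL βL, interfacePatch αR βR, interfacePatch.isBilinear _ _ hαL hβL,
    interfacePatch.isBilinear _ _ hαR hβR, fun v => by simp, fun v hv => ⟨?_, ?_, ?_⟩⟩
  · exact (interfacePatch.det2_derivs αL βL v).trans_ne (hposL v hv).ne'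
  · exact (interfacePatch.det2_derivs αR βR v).trans_ne (hposR v hv).ne'
  · simp only [interfacePatch.deriv_left]
    exact smul_vec_sub_smul_vec_add_smul_e2 _ _ _ _
end

section
/- Let p ≥ 1, r ≥ 0 and n ≥ 1 be integers. Let α and β be real polynomial functions of degree at most 1, let g₀ ∈ S^p_{r+1}(n) and g₁ ∈ S^{p−1}_r(n). Then the function v ↦ β(v)·g₀'(v) + α(v)·g₁(v) belongs to S^p_r(n); consequently, the function g(u,v) = g₀(v) + (β(v)·g₀'(v) + α(v)·g₁(v))·u is, for each fixed u, a function of v lying in S^p_r(n), and is a polynomial of degree at most 1 in u for each fixed v. (This is the constructive core of Theorem 5.1: over an analysis-suitable G¹ two-patch geometry, every pair (g₀, g₁) ∈ S^p_{r+1} × S^{p−1}_r of trace and transversal derivative data is realized by tensor-product splines of degree p and continuity r on each patch.) -/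
/-!
On each knot interval `g₀` is a polynomial of degree `≤ p`, so its derivative within `[0,1]` is the
derivative of that polynomial, of degree `≤ p - 1`; multiplying by the affine `β` and adding
`α · g₁` gives degree `≤ p`. Smoothness of class `C^r` is preserved because `g₀ ∈ C^{r+1}`.
-/

/-- `S^p_r(n)`: the space of functions `f : [0,1] → ℝ` that are `r` times continuously
differentiable on `[0,1]` and coincide, on each interval `[i/n, (i+1)/n]` for
`i = 0,…,n−1`, with a polynomial of degree at most `p`. -/
def IsSpline (p r n : ℕ) (f : ℝ → ℝ) : Prop :=
  ContDiffOn ℝ r f (Set.Icc 0 1) ∧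
  ∀ i : ℕ, i < n →
    ∃ q : Polynomial ℝ, q.natDegree ≤ p ∧
      ∀ x ∈ Set.Icc ((i : ℝ) / n) (((i : ℝ) + 1) / n), f x = q.eval x

open Polynomial Set

lemma Icc_div_subset_Icc_zero_one {i n : ℕ} (hi : i < n) :
    Icc ((i : ℝ) / n) (((i : ℝ) + 1) / n) ⊆ Icc 0 1 := by
  have hn : (0 : ℝ) < n := by exact_mod_cast (Nat.zero_le i).trans_lt hi
  refine Icc_subset_Icc (by positivity) ?_
  rw [div_le_one hn]
  exact_mod_cast hi

lemma natCast_div_lt_add_one_div {i n : ℕ} (hi : i < n) :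
    (i : ℝ) / n < ((i : ℝ) + 1) / n := by
  have hn : (0 : ℝ) < n := by exact_mod_cast (Nat.zero_le i).trans_lt hi
  exact div_lt_div_of_pos_right (lt_add_one _) hn

lemma derivWithin_eq_derivative_eval {f : ℝ → ℝ} {s t : Set ℝ} {x : ℝ} {q : ℝ[X]}
    (hf : DifferentiableWithinAt ℝ f s x) (hts : t ⊆ s) (ht : UniqueDiffWithinAt ℝ t x)
    (hx : x ∈ t) (hfq : EqOn f q.eval t) : derivWithin f s x = q.derivative.eval x := by
  have hf' : HasDerivWithinAt q.eval (derivWithin f s x) t x :=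
    (hf.hasDerivWithinAt.mono hts).congr (fun y hy => (hfq hy).symm) (hfq hx).symm
  exact ht.eq_deriv t hf' (q.hasDerivAt x).hasDerivWithinAt

namespace IsSpline

variable {p p' r r' n : ℕ} {f g : ℝ → ℝ}

lemma of_polynomial (q : ℝ[X]) (hq : q.natDegree ≤ p) : IsSpline p r n q.eval := by
  refine ⟨?_, fun _ _ => ⟨q, hq, fun _ _ => rfl⟩⟩
  simpa using (q.contDiff_aeval (𝕜 := ℝ) r).contDiffOn

lemma of_affine {a b : ℝ} (hf : ∀ v, f v = a + b * v) : IsSpline 1 r n f := by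
  have : f = (C b * X + C a).eval := funext fun v => by simp [hf, add_comm]
  exact this ▸ of_polynomial _ natDegree_linear_le

lemma const (c : ℝ) : IsSpline 0 r n fun _ => c := by
  simpa using of_polynomial (r := r) (n := n) (C c) (natDegree_C c).le

lemma mono (hf : IsSpline p r n f) (hp : p ≤ p') (hr : r' ≤ r) : IsSpline p' r' n f := by
  refine ⟨hf.1.of_le (by exact_mod_cast hr), fun i hi => ?_⟩
  obtain ⟨q, hq, hfq⟩ := hf.2 i hi
  exact ⟨q, hq.trans hp, hfq⟩

lemma add (hf : IsSpline p r n f) (hg : IsSpline p r n g) : IsSpline p r n (f + g) := by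
  refine ⟨hf.1.add hg.1, fun i hi => ?_⟩
  obtain ⟨q, hq, hfq⟩ := hf.2 i hi
  obtain ⟨q', hq', hgq⟩ := hg.2 i hi
  refine ⟨q + q', (natDegree_add_le _ _).trans (max_le hq hq'), fun x hx => ?_⟩
  simp [hfq x hx, hgq x hx]

lemma mul (hf : IsSpline p r n f) (hg : IsSpline p' r n g) : IsSpline (p + p') r n (f * g) := by
  refine ⟨hf.1.mul hg.1, fun i hi => ?_⟩
  obtain ⟨q, hq, hfq⟩ := hf.2 i hi
  obtain ⟨q', hq', hgq⟩ := hg.2 i hi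
  refine ⟨q * q', natDegree_mul_le.trans (add_le_add hq hq'), fun x hx => ?_⟩
  simp [hfq x hx, hgq x hx]

lemma derivWithin (hf : IsSpline p (r + 1) n f) :
    IsSpline (p - 1) r n (derivWithin f (Icc 0 1)) := by
  refine ⟨hf.1.derivWithin (uniqueDiffOn_Icc one_pos) (by norm_cast), fun i hi => ?_⟩
  obtain ⟨q, hq, hfq⟩ := hf.2 i hi
  refine ⟨derivative q, (natDegree_derivative_le q).trans (Nat.sub_le_sub_right hq 1),
    fun x hx => ?_⟩
  have hdiff := hf.1.differentiableOn (by simp) x (Icc_div_subset_Icc_zero_one hi hx)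
  exact derivWithin_eq_derivative_eval hdiff (Icc_div_subset_Icc_zero_one hi)
    (uniqueDiffOn_Icc (natCast_div_lt_add_one_div hi) x hx) hx hfq

end IsSpline

theorem stmt11_general (p r n : ℕ) (hp : 1 ≤ p)
    (α β : ℝ → ℝ)
    (hα : ∃ a b : ℝ, ∀ v, α v = a + b * v)
    (hβ : ∃ a b : ℝ, ∀ v, β v = a + b * v)
    (g₀ g₁ : ℝ → ℝ)
    (hg₀ : IsSpline p (r + 1) n g₀) (hg₁ : IsSpline (p - 1) r n g₁)
    (g : ℝ → ℝ → ℝ)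
    (hg : ∀ u v : ℝ,
      g u v = g₀ v + (β v * derivWithin g₀ (Set.Icc 0 1) v + α v * g₁ v) * u) :
    IsSpline p r n (fun v => β v * derivWithin g₀ (Set.Icc 0 1) v + α v * g₁ v) ∧
    (∀ u : ℝ, IsSpline p r n (fun v => g u v)) ∧
    (∀ v : ℝ, ∃ c d : ℝ, ∀ u : ℝ, g u v = c + d * u) := by
  obtain ⟨a₁, b₁, hα⟩ := hα
  obtain ⟨a₂, b₂, hβ⟩ := hβ
  have hdeg : 1 + (p - 1) = p := Nat.add_sub_cancel' hp
  have hcomb : IsSpline p r n (fun v => β v * derivWithin g₀ (Set.Icc 0 1) v + α v * g₁ v) :=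
    hdeg ▸ ((IsSpline.of_affine hβ).mul hg₀.derivWithin).add ((IsSpline.of_affine hα).mul hg₁)
  refine ⟨hcomb, fun u => ?_, fun v => ⟨_, _, fun u => hg u v⟩⟩
  have hgu : (fun v => g u v) = g₀ + _ * fun _ => u := funext fun v => hg u v
  rw [hgu]
  exact (hg₀.mono le_rfl r.le_succ).add (hcomb.mul (IsSpline.const u))

/-- Constructive core of Theorem 5.1: for linear α, β and data
`(g₀, g₁) ∈ S^p_{r+1}(n) × S^{p−1}_r(n)`, the combination `β·g₀' + α·g₁` lies in
`S^p_r(n)`; consequently `g(u,v) = g₀(v) + (β(v)·g₀'(v) + α(v)·g₁(v))·u` is, for each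
fixed `u`, a spline in `S^p_r(n)` as a function of `v`, and a polynomial of degree at
most 1 in `u` for each fixed `v`. -/
theorem stmt11 (p r n : ℕ) (hp : 1 ≤ p) (hr : 0 ≤ r) (hn : 1 ≤ n)
    (α β : ℝ → ℝ)
    (hα : ∃ a b : ℝ, ∀ v, α v = a + b * v)
    (hβ : ∃ a b : ℝ, ∀ v, β v = a + b * v)
    (g₀ g₁ : ℝ → ℝ)
    (hg₀ : IsSpline p (r + 1) n g₀) (hg₁ : IsSpline (p - 1) r n g₁)
    (g : ℝ → ℝ → ℝ)
    (hg : ∀ u v : ℝ,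
      g u v = g₀ v + (β v * derivWithin g₀ (Set.Icc 0 1) v + α v * g₁ v) * u) :
    IsSpline p r n (fun v => β v * derivWithin g₀ (Set.Icc 0 1) v + α v * g₁ v) ∧
    (∀ u : ℝ, IsSpline p r n (fun v => g u v)) ∧
    (∀ v : ℝ, ∃ c d : ℝ, ∀ u : ℝ, g u v = c + d * u) :=
  stmt11_general p r n hp α β hα hβ g₀ g₁ hg₀ hg₁ g hg
end

section
/- Let p ≥ 1 and n ≥ 2 be integers, and let β be a real polynomial function of degree at most 1 such that β(i/n) ≠ 0 for every interior knot i = 1,…,n−1. If g₀ ∈ S^p_{p−1}(n) and the function v ↦ β(v)·g₀'(v) also belongs to S^p_{p−1}(n), then g₀ coincides on [0,1] with a single polynomial of degree at most p. (This is the first claim in the proof of Theorem 5.2: for maximal smoothness r = p−1 and nonzero linear β, the trace g₀ is locked to a space of global polynomials, whose dimension is independent of the mesh size h = 1/n.) -/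
open Polynomial Set Filter Topology

private lemma iteratedDeriv_polyEval (k : ℕ) (q : Polynomial ℝ) :
    iteratedDeriv k (fun x => q.eval x) = fun x => (derivative^[k] q).eval x := by
  induction k generalizing q with
  | zero => simp
  | succ k ih =>
    rw [iteratedDeriv_succ']
    have h : deriv (fun x : ℝ => q.eval x) = fun x => q.derivative.eval x := by
      funext x; exact q.deriv
    rw [h, ih, Function.iterate_succ_apply]

private lemma iteratedDerivWithin_eq_poly {f : ℝ → ℝ} {q : Polynomial ℝ} {c d : ℝ}
    (hc : 0 ≤ c) (hd : d ≤ 1) (hf : ∀ x ∈ Icc c d, f x = q.eval x) (k : ℕ)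
    {x : ℝ} (hx : x ∈ Ioo c d) :
    iteratedDerivWithin k f (Icc 0 1) x = (derivative^[k] q).eval x := by
  have hsub : Ioo c d ⊆ Icc (0:ℝ) 1 := fun y hy => ⟨hc.trans hy.1.le, hy.2.le.trans hd⟩
  have hnb : Ioo c d ∈ 𝓝 x := isOpen_Ioo.mem_nhds hx
  have h1 : iteratedDerivWithin k f (Icc 0 1) x = iteratedDerivWithin k f (Ioo c d) x := by
    rw [iteratedDerivWithin_eq_iteratedFDerivWithin, iteratedDerivWithin_eq_iteratedFDerivWithin]
    rw [← iteratedFDerivWithin_inter (f := f) (s := Icc 0 1) (n := k) hnb,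
      Set.inter_eq_self_of_subset_right hsub]
  have h2 : iteratedDerivWithin k f (Ioo c d) x = iteratedDeriv k f x := by
    rw [iteratedDerivWithin_eq_iteratedFDerivWithin, iteratedDeriv_eq_iteratedFDeriv,
      iteratedFDerivWithin_of_isOpen k isOpen_Ioo hx]
  have h3 : iteratedDeriv k f x = iteratedDeriv k (fun y => q.eval y) x := by
    apply Filter.EventuallyEq.iteratedDeriv_eq
    exact Filter.eventuallyEq_of_mem hnb fun y hy => hf y (Ioo_subset_Icc_self hy)
  rw [h1, h2, h3, iteratedDeriv_polyEval]

private lemma knot_match {f : ℝ → ℝ} {r : ℕ} (hf : ContDiffOn ℝ r f (Icc 0 1))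
    {P Q : Polynomial ℝ} {c m d : ℝ} (hc : 0 ≤ c) (hcm : c < m) (hmd : m < d) (hd : d ≤ 1)
    (hP : ∀ x ∈ Icc c m, f x = P.eval x) (hQ : ∀ x ∈ Icc m d, f x = Q.eval x)
    {k : ℕ} (hk : k ≤ r) :
    (derivative^[k] P).eval m = (derivative^[k] Q).eval m := by
  have hm1 : m ≤ 1 := (hmd.le.trans hd)
  have hm0 : 0 ≤ m := hc.trans hcm.le
  have hm01 : m ∈ Icc (0:ℝ) 1 := ⟨hm0, hm1⟩
  have hcont : ContinuousOn (iteratedDerivWithin k f (Icc 0 1)) (Icc 0 1) :=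
    hf.continuousOn_iteratedDerivWithin (by exact_mod_cast hk) (uniqueDiffOn_Icc one_pos)
  have key : ∀ (R : Polynomial ℝ) (s : Set ℝ), s ⊆ Icc (0:ℝ) 1 → (𝓝[s] m).NeBot →
      (∀ y ∈ s, iteratedDerivWithin k f (Icc 0 1) y = (derivative^[k] R).eval y) →
      iteratedDerivWithin k f (Icc 0 1) m = (derivative^[k] R).eval m := by
    intro R s hs hne heq
    have hL : Tendsto (iteratedDerivWithin k f (Icc 0 1)) (𝓝[s] m)
        (𝓝 (iteratedDerivWithin k f (Icc 0 1) m)) := (hcont m hm01).mono hs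
    have hR : Tendsto (iteratedDerivWithin k f (Icc 0 1)) (𝓝[s] m)
        (𝓝 ((derivative^[k] R).eval m)) := by
      refine Tendsto.congr' ?_ (((Polynomial.continuous _).tendsto m).mono_left nhdsWithin_le_nhds)
      exact eventually_nhdsWithin_of_forall fun y hy => (heq y hy).symm
    exact tendsto_nhds_unique hL hR
  have e1 := key P (Ioo c m) (fun y hy => ⟨hc.trans hy.1.le, hy.2.le.trans hm1⟩)
    (right_nhdsWithin_Ioo_neBot hcm)
    (fun y hy => iteratedDerivWithin_eq_poly hc hm1 hP k hy)
  have e2 := key Q (Ioo m d) (fun y hy => ⟨hm0.trans hy.1.le, hy.2.le.trans hd⟩)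
    (left_nhdsWithin_Ioo_neBot hmd)
    (fun y hy => iteratedDerivWithin_eq_poly hm0 hd hQ k hy)
  rw [← e1, e2]

private lemma poly_eq_C_mul_pow {d : Polynomial ℝ} {p : ℕ} {a : ℝ}
    (hd : d.natDegree ≤ p) (h : ∀ k < p, (derivative^[k] d).eval a = 0) :
    ∃ c : ℝ, d = C c * (X - C a) ^ p := by
  refine ⟨(taylor a d).coeff p, ?_⟩
  apply taylor_injective a
  have htay : taylor a (C ((taylor a d).coeff p) * (X - C a) ^ p)
      = C ((taylor a d).coeff p) * X ^ p := by
    simp [taylor_apply, mul_comp, pow_comp, sub_comp]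
  rw [htay]
  ext j
  rw [coeff_C_mul, coeff_X_pow]
  rcases lt_trichotomy j p with hj | rfl | hj
  · have : (taylor a d).coeff j = 0 := by
      rw [taylor_coeff]
      have hfac := congrFun (factorial_smul_hasseDeriv (R := ℝ) (k := j)) d
      have : (j.factorial : ℝ) * (hasseDeriv j d).eval a = (derivative^[j] d).eval a := by
        rw [← hfac]; simp [mul_comm]
      have h0 := h j hj
      rw [← this] at h0
      have hne : (j.factorial : ℝ) ≠ 0 := by exact_mod_cast j.factorial_ne_zero
      rcases mul_eq_zero.mp h0 with h0 | h0
      · exact absurd h0 hne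
      · exact h0
    rw [this]; simp [hj.ne]
  · simp
  · have : (taylor a d).coeff j = 0 := by
      apply coeff_eq_zero_of_natDegree_lt
      rw [natDegree_taylor]; omega
    rw [this]; simp [hj.ne']

/-- First claim in the proof of Theorem 5.2: for maximal smoothness `r = p−1` and a linear
polynomial β not vanishing at the interior knots, if `g₀ ∈ S^p_{p−1}(n)` and
`β·g₀' ∈ S^p_{p−1}(n)`, then `g₀` is a single global polynomial of degree at most `p`. -/
theorem stmt13 (p n : ℕ) (hp : 1 ≤ p) (hn : 2 ≤ n)
    (β : ℝ → ℝ) (hβ : ∃ a b : ℝ, ∀ v, β v = a + b * v)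
    (hβne : ∀ i : ℕ, 1 ≤ i → i ≤ n - 1 → β ((i : ℝ) / n) ≠ 0)
    (g₀ : ℝ → ℝ) (hg₀ : IsSpline p (p - 1) n g₀)
    (hprod : IsSpline p (p - 1) n (fun v => β v * derivWithin g₀ (Set.Icc 0 1) v)) :
    ∃ q : Polynomial ℝ, q.natDegree ≤ p ∧
      ∀ x ∈ Set.Icc (0 : ℝ) 1, g₀ x = q.eval x := by
  classical
  obtain ⟨a, b, hab⟩ := hβ
  obtain ⟨hgs, hgp⟩ := hg₀
  obtain ⟨hhs, hhp⟩ := hprod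
  choose! q hqdeg hq using hgp
  choose! r hrdeg hr using hhp
  have hn0 : (0:ℝ) < n := by
    have : (0:ℕ) < n := by omega
    exact_mod_cast this
  set B : Polynomial ℝ := C a + C b * X with hB
  have hBeval : ∀ v : ℝ, B.eval v = β v := fun v => by simp [hB, hab v]
  -- Step A : on each piece, r i = B * (q i)'
  have hA : ∀ i, i < n → r i = B * derivative (q i) := by
    intro i hi
    have hle1 : ((i:ℝ)+1)/n ≤ 1 := by
      rw [div_le_one hn0]
      have : (i:ℕ) + 1 ≤ n := hi
      exact_mod_cast this
    have h0le : (0:ℝ) ≤ (i:ℝ)/n := by positivity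
    have hlt : (i:ℝ)/n < ((i:ℝ)+1)/n := by
      rw [div_lt_div_iff₀ hn0 hn0]; nlinarith
    apply eq_of_infinite_eval_eq
    apply (Set.Ioo_infinite hlt).mono
    intro x hx
    have hnb : Ioo ((i:ℝ)/n) (((i:ℝ)+1)/n) ∈ 𝓝 x := isOpen_Ioo.mem_nhds hx
    have hsubIcc : Ioo ((i:ℝ)/n) (((i:ℝ)+1)/n) ⊆ Icc (0:ℝ) 1 := fun y hy =>
      ⟨h0le.trans hy.1.le, hy.2.le.trans hle1⟩
    have h1 : eval x (r i) = β x * derivWithin g₀ (Icc 0 1) x :=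
      (hr i hi x (Ioo_subset_Icc_self hx)).symm
    have h2 : derivWithin g₀ (Icc 0 1) x = deriv g₀ x :=
      derivWithin_of_mem_nhds (Filter.mem_of_superset hnb hsubIcc)
    have h3 : deriv g₀ x = (derivative (q i)).eval x := by
      have he : g₀ =ᶠ[𝓝 x] fun y => (q i).eval y :=
        Filter.eventuallyEq_of_mem hnb fun y hy => hq i hi y (Ioo_subset_Icc_self hy)
      rw [he.deriv_eq]; exact (q i).deriv
    show eval x (r i) = eval x (B * derivative (q i))
    rw [h1, h2, h3, eval_mul, hBeval]
  -- Step B : knot matching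
  have hknot : ∀ (f : ℝ → ℝ) (Q : ℕ → Polynomial ℝ), ContDiffOn ℝ (↑(p-1)) f (Icc 0 1) →
      (∀ i, i < n → ∀ x ∈ Icc ((i:ℝ)/n) (((i:ℝ)+1)/n), f x = (Q i).eval x) →
      ∀ j : ℕ, j + 1 < n → ∀ k, k ≤ p - 1 →
      (derivative^[k] (Q j)).eval (((j:ℝ)+1)/n) = (derivative^[k] (Q (j+1))).eval (((j:ℝ)+1)/n) := by
    intro f Q hfs hfq j hj k hk
    have hQ1 : ∀ x ∈ Icc (((j:ℝ)+1)/n) (((j:ℝ)+2)/n), f x = (Q (j+1)).eval x := by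
      intro x hx
      apply hfq (j+1) hj
      have e1 : ((j+1 : ℕ):ℝ) = (j:ℝ) + 1 := by push_cast; ring
      rw [e1]
      refine ⟨hx.1, hx.2.trans_eq (by ring_nf)⟩
    refine knot_match hfs (by positivity) ?_ ?_ ?_ (hfq j (by omega)) hQ1 hk
    · rw [div_lt_div_iff₀ hn0 hn0]; nlinarith
    · rw [div_lt_div_iff₀ hn0 hn0]; nlinarith
    · rw [div_le_one hn0]
      have : (j:ℕ) + 2 ≤ n := by omega
      exact_mod_cast this
  -- Step D : adjacent pieces coincide
  have hstep : ∀ j : ℕ, j + 1 < n → q (j+1) = q j := by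
    intro j hj
    set m : ℝ := ((j:ℝ)+1)/n with hm
    have hβm : β m ≠ 0 := by
      have := hβne (j+1) (by omega) (by omega)
      have e1 : ((j+1 : ℕ):ℝ) = (j:ℝ) + 1 := by push_cast; ring
      rwa [e1] at this
    have hdegd : (q (j+1) - q j).natDegree ≤ p :=
      le_trans (natDegree_sub_le _ _) (max_le (hqdeg _ hj) (hqdeg j (by omega)))
    have hvand : ∀ k < p, (derivative^[k] (q (j+1) - q j)).eval m = 0 := by
      intro k hk
      rw [iterate_derivative_sub, eval_sub,
        ← hknot g₀ q hgs hq j hj k (by omega), sub_self]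
    obtain ⟨c, hc⟩ := poly_eq_C_mul_pow hdegd hvand
    have hdegre : (r (j+1) - r j).natDegree ≤ p :=
      le_trans (natDegree_sub_le _ _) (max_le (hrdeg _ hj) (hrdeg j (by omega)))
    have hvanr : ∀ k < p, (derivative^[k] (r (j+1) - r j)).eval m = 0 := by
      intro k hk
      rw [iterate_derivative_sub, eval_sub,
        ← hknot _ r hhs hr j hj k (by omega), sub_self]
    obtain ⟨c', hc'⟩ := poly_eq_C_mul_pow hdegre hvanr
    have hre : C c' * (X - C m) ^ p = B * derivative (C c * (X - C m) ^ p) := by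
      rw [← hc, ← hc', hA (j+1) hj, hA j (by omega), derivative_sub]
      ring
    rw [derivative_C_mul, derivative_pow, derivative_X_sub_C, mul_one] at hre
    have hps : (p - 1) + 1 = p := Nat.succ_pred_eq_of_pos hp
    have key : (X - C m)^(p-1) * (C c' * (X - C m)) = (X - C m)^(p-1) * (B * (C c * C (p:ℝ))) := by
      calc (X - C m)^(p-1) * (C c' * (X - C m)) = C c' * ((X - C m)^(p-1) * (X - C m)) := by ring
      _ = C c' * (X - C m)^p := by rw [← pow_succ, hps]
      _ = B * (C c * (C (p:ℝ) * (X - C m)^(p-1))) := hre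
      _ = (X - C m)^(p-1) * (B * (C c * C (p:ℝ))) := by ring
    have hcancel : C c' * (X - C m) = B * (C c * C (p:ℝ)) :=
      mul_left_cancel₀ (pow_ne_zero _ (X_sub_C_ne_zero m)) key
    have hev := congrArg (eval m) hcancel
    simp only [eval_mul, eval_sub, eval_X, eval_C, sub_self, mul_zero, hBeval m] at hev
    have hc0 : c = 0 := by
      rcases mul_eq_zero.mp hev.symm with h | h
      · exact absurd h hβm
      · rcases mul_eq_zero.mp h with h | h
        · exact h
        · exfalso
          have : (p:ℝ) ≠ 0 := by
            have : (0:ℕ) < p := hp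
            exact_mod_cast this.ne'
          exact this h
    rw [hc0, map_zero, zero_mul] at hc
    exact sub_eq_zero.mp hc
  have hall : ∀ i, i < n → q i = q 0 := by
    intro i
    induction i with
    | zero => intro _; rfl
    | succ j ih => intro hj; rw [hstep j hj]; exact ih (by omega)
  refine ⟨q 0, hqdeg 0 (by omega), ?_⟩
  intro x hx
  rcases eq_or_lt_of_le hx.2 with h1 | h1
  · have hn1 : n - 1 < n := by omega
    have e1 : ((n-1:ℕ):ℝ) = (n:ℝ) - 1 := by
      have h1n : (1:ℕ) ≤ n := by omega
      push_cast [Nat.cast_sub h1n]; ring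
    have hmem : x ∈ Icc ((↑(n-1):ℝ)/n) (((↑(n-1):ℝ)+1)/n) := by
      rw [e1]
      constructor
      · rw [div_le_iff₀ hn0] at *
        nlinarith
      · have e2 : (n:ℝ)-1+1 = n := by ring
        rw [e2, div_self hn0.ne', h1]
    rw [hq (n-1) hn1 x hmem, hall (n-1) hn1]
  · set i := ⌊x * n⌋₊ with hi
    have hin : i < n := by
      have hxn : x * n < n := by nlinarith [hx.1]
      have := (Nat.floor_lt (mul_nonneg hx.1 hn0.le)).mpr (by exact_mod_cast hxn)
      exact_mod_cast this
    have hmem : x ∈ Icc ((i:ℝ)/n) (((i:ℝ)+1)/n) := by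
      constructor
      · rw [div_le_iff₀ hn0]
        exact Nat.floor_le (mul_nonneg hx.1 hn0.le)
      · rw [le_div_iff₀ hn0]
        exact (Nat.lt_floor_add_one (x*n)).le
    rw [hq i hin x hmem, hall i hin]
end

section
/- Let p ≥ 1 and n ≥ 1 be integers. If f ∈ S^p_{p−1}(n) and the function v ↦ v·f(v) also belongs to S^p_{p−1}(n), then f coincides on [0,1] with a single polynomial of degree at most p − 1; in particular, the real vector space of all such functions f has dimension at most p, independent of n. (This is the second claim in the proof of Theorem 5.2: when α^{(L)} and α^{(R)} are linearly independent linear polynomials, the transversal derivative data g₁ is locked to global polynomials of degree p − 1.) -/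
/-!
On each cell `[i/n, (i+1)/n]` write `f = qᵢ`. The piece of `v ↦ v·f(v)` on that cell has degree
at most `p` and must be `X * qᵢ`, so every `qᵢ` has degree less than `p`. At an interior
breakpoint `t`, the `C^{p-1}` regularity of `f` forces `qᵢ - qᵢ₊₁` to vanish to order `p` at `t`,
which for a polynomial of degree less than `p` means `qᵢ = qᵢ₊₁`. Hence all pieces coincide, and
`f` lies in the image of the `p`-dimensional space of polynomials of degree less than `p`.
-/

open Polynomial Set

namespace Polynomial

theorem eq_of_eqOn_Icc {a b : ℝ} (hab : a < b) {q r : ℝ[X]}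
    (h : EqOn (fun x => q.eval x) (fun x => r.eval x) (Icc a b)) : q = r :=
  eq_of_infinite_eval_eq q r ((Icc_infinite hab).mono h)

theorem degree_lt_of_natDegree_X_mul_le {R : Type*} [Semiring R] [Nontrivial R] {q : R[X]}
    {p : ℕ} (h : (X * q).natDegree ≤ p) : q.degree < p := by
  rcases eq_or_ne q 0 with rfl | hq
  · simp
  · rw [natDegree_X_mul hq] at h
    exact (natDegree_lt_iff_degree_lt hq).1 (by omega)

theorem eq_of_degree_lt_of_iterate_derivative_eval_eq {R : Type*} [CommRing R] [IsDomain R]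
    [CharZero R] {k : ℕ} {q q' : R[X]} {t : R} (hq : q.degree < k) (hq' : q'.degree < k)
    (h : ∀ j < k, (derivative^[j] q).eval t = (derivative^[j] q').eval t) : q = q' := by
  by_contra hne
  have hd : q - q' ≠ 0 := sub_ne_zero.2 hne
  have hmult : k ≤ (q - q').rootMultiplicity t := by
    cases k with
    | zero => exact Nat.zero_le _
    | succ k =>
      refine lt_rootMultiplicity_of_isRoot_iterate_derivative hd fun j hj => ?_
      simp [IsRoot, h j (by omega)]
  have hdeg : (k : WithBot ℕ) ≤ (q - q').degree := by
    simpa using degree_le_of_dvd ((pow_dvd_pow _ hmult).trans (pow_rootMultiplicity_dvd _ t)) hd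
  exact not_lt.2 hdeg ((degree_sub_le q q').trans_lt (max_lt hq hq'))

theorem iteratedDeriv_eval {𝕜 : Type*} [NontriviallyNormedField 𝕜] (q : 𝕜[X]) (j : ℕ) :
    iteratedDeriv j (fun x => q.eval x) = fun x => (derivative^[j] q).eval x := by
  induction j generalizing q with
  | zero => simp
  | succ j ih =>
    rw [iteratedDeriv_succ', Function.iterate_succ_apply, ← ih]
    congr 1
    funext x
    exact q.deriv

end Polynomial

theorem iteratedDerivWithin_eq_iterate_derivative_eval {𝕜 : Type*} [NontriviallyNormedField 𝕜]
    {j : ℕ} {f : 𝕜 → 𝕜} {q : 𝕜[X]} {s u : Set 𝕜} {x : 𝕜} (hsu : s ⊆ u)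
    (hs : UniqueDiffOn 𝕜 s) (hu : UniqueDiffOn 𝕜 u) (hf : ContDiffOn 𝕜 j f u)
    (hfq : EqOn f (fun y => q.eval y) s) (hx : x ∈ s) :
    iteratedDerivWithin j f u x = (derivative^[j] q).eval x :=
  calc iteratedDerivWithin j f u x = iteratedDerivWithin j f s x := by
        simp only [iteratedDerivWithin, iteratedFDerivWithin_subset hsu hs hu hf hx]
    _ = iteratedDerivWithin j (fun y => q.eval y) s x := iteratedDerivWithin_congr hfq hx
    _ = iteratedDeriv j (fun y => q.eval y) x :=
        iteratedDerivWithin_eq_iteratedDeriv hs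
          (by simpa using (q.contDiff_aeval (𝕜 := 𝕜) j).contDiffAt) hx
    _ = (derivative^[j] q).eval x := by rw [iteratedDeriv_eval]

theorem iterate_derivative_eval_eq_of_contDiffOn {k j : ℕ} {f : ℝ → ℝ} {a t b : ℝ}
    (hat : a < t) (htb : t < b) (hf : ContDiffOn ℝ k f (Icc a b)) {q q' : ℝ[X]}
    (hq : EqOn f (fun x => q.eval x) (Icc a t)) (hq' : EqOn f (fun x => q'.eval x) (Icc t b))
    (hj : j ≤ k) : (derivative^[j] q).eval t = (derivative^[j] q').eval t := by
  have hfj : ContDiffOn ℝ j f (Icc a b) := hf.of_le (by exact_mod_cast hj)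
  have hu : UniqueDiffOn ℝ (Icc a b) := uniqueDiffOn_Icc (hat.trans htb)
  rw [← iteratedDerivWithin_eq_iterate_derivative_eval (Icc_subset_Icc_right htb.le)
      (uniqueDiffOn_Icc hat) hu hfj hq (right_mem_Icc.2 hat.le),
    iteratedDerivWithin_eq_iterate_derivative_eval (Icc_subset_Icc_left hat.le)
      (uniqueDiffOn_Icc htb) hu hfj hq' (left_mem_Icc.2 htb.le)]

theorem exists_polynomial_eqOn_of_contDiffOn {k m n : ℕ} (hmk : m ≤ k + 1) (hn : 1 ≤ n)
    {x : ℕ → ℝ} (hx : StrictMono x) {f : ℝ → ℝ} (hf : ContDiffOn ℝ k f (Icc (x 0) (x n)))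
    (hpiece : ∀ i < n, ∃ q : ℝ[X], q.degree < m ∧
      EqOn f (fun y => q.eval y) (Icc (x i) (x (i + 1)))) :
    ∃ q : ℝ[X], q.degree < m ∧ EqOn f (fun y => q.eval y) (Icc (x 0) (x n)) := by
  obtain ⟨q, hqm, hq⟩ := hpiece 0 hn
  refine ⟨q, hqm, ?_⟩
  suffices ∀ i, 1 ≤ i → i ≤ n → EqOn f (fun y => q.eval y) (Icc (x 0) (x i)) from
    this n hn le_rfl
  intro i hi
  induction i, hi using Nat.le_induction with
  | base => exact fun _ => hq
  | succ i hi ih =>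
    intro hin
    obtain ⟨r, hrm, hr⟩ := hpiece i (by omega)
    have hx0i : x 0 < x i := hx (by omega)
    have hxi : x i < x (i + 1) := hx i.lt_succ_self
    have hfi : ContDiffOn ℝ k f (Icc (x 0) (x (i + 1))) :=
      hf.mono (Icc_subset_Icc_right (hx.monotone hin))
    have hqr : q = r := eq_of_degree_lt_of_iterate_derivative_eval_eq hqm hrm fun j hj =>
      iterate_derivative_eval_eq_of_contDiffOn hx0i hxi hfi (ih (by omega)) hr (by omega)
    rw [← Icc_union_Icc_eq_Icc hx0i.le hxi.le]
    exact (ih (by omega)).union (hqr ▸ hr)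

namespace IsSpline

variable {p r n : ℕ} {f : ℝ → ℝ}

theorem exists_degree_lt_of_isSpline_mul_id (hf : IsSpline p r n f)
    (hvf : IsSpline p r n fun v => v * f v) {i : ℕ} (hi : i < n) :
    ∃ q : ℝ[X], q.degree < p ∧ EqOn f (fun x => q.eval x) (Icc (i / n) ((i + 1) / n)) := by
  obtain ⟨q, -, hq⟩ := hf.2 i hi
  obtain ⟨s, hsp, hs⟩ := hvf.2 i hi
  have hcell : (i : ℝ) / n < (i + 1) / n :=
    div_lt_div_of_pos_right (lt_add_one _) (by exact_mod_cast (Nat.zero_le i).trans_lt hi)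
  have hsq : s = X * q := eq_of_eqOn_Icc hcell fun x hx => by simp [← hs x hx, hq x hx]
  exact ⟨q, degree_lt_of_natDegree_X_mul_le (hsq ▸ hsp), hq⟩

theorem exists_polynomial_of_isSpline_mul_id (hn : 1 ≤ n) (hf : IsSpline p (p - 1) n f)
    (hvf : IsSpline p (p - 1) n fun v => v * f v) :
    ∃ q : ℝ[X], q.degree < p ∧ EqOn f (fun x => q.eval x) (Icc 0 1) := by
  have hn0 : (0 : ℝ) < n := by exact_mod_cast hn
  simpa [hn0.ne'] using exists_polynomial_eqOn_of_contDiffOn (k := p - 1) (by omega) hn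
    (x := fun i : ℕ => (i : ℝ) / n)
    (fun i j hij => div_lt_div_of_pos_right (by exact_mod_cast hij) hn0)
    (by simpa [hn0.ne'] using hf.1)
    (fun i hi => by simpa using hf.exists_degree_lt_of_isSpline_mul_id hvf hi)

end IsSpline

theorem stmt15_general (p n : ℕ) (hn : 1 ≤ n) :
    (∀ f : ℝ → ℝ, IsSpline p (p - 1) n f →
      IsSpline p (p - 1) n (fun v => v * f v) →
      ∃ q : Polynomial ℝ, q.natDegree ≤ p - 1 ∧
        ∀ x ∈ Set.Icc (0 : ℝ) 1, f x = q.eval x) ∧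
    Module.rank ℝ
      ↥(Submodule.span ℝ
        {g : ↥(Set.Icc (0 : ℝ) 1) → ℝ |
          ∃ f : ℝ → ℝ,
            (∀ x : ↥(Set.Icc (0 : ℝ) 1), g x = f (x : ℝ)) ∧
            IsSpline p (p - 1) n f ∧
            IsSpline p (p - 1) n (fun v => v * f v)}) ≤ (p : Cardinal) := by
  refine ⟨fun f hf hvf => ?_, ?_⟩
  · obtain ⟨q, hqp, hfq⟩ := hf.exists_polynomial_of_isSpline_mul_id hn hvf
    refine ⟨q, ?_, hfq⟩
    rcases eq_or_ne q 0 with rfl | hq0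
    · simp
    · have := (natDegree_lt_iff_degree_lt hq0).2 hqp
      omega
  · let restrict : ℝ[X] →ₗ[ℝ] (Icc (0 : ℝ) 1 → ℝ) := LinearMap.pi fun x => leval (x : ℝ)
    calc _ ≤ Module.rank ℝ ((degreeLT ℝ p).map restrict) :=
          Submodule.rank_mono <| Submodule.span_le.2 ?_
      _ ≤ Module.rank ℝ (degreeLT ℝ p) := rank_map_le restrict _
      _ = p := by rw [(degreeLTEquiv ℝ p).rank_eq, rank_fin_fun]
    rintro g ⟨f, hgf, hf, hvf⟩
    obtain ⟨q, hqp, hfq⟩ := hf.exists_polynomial_of_isSpline_mul_id hn hvf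
    exact ⟨q, mem_degreeLT.2 hqp, funext fun x => ((hgf x).trans (hfq x.2)).symm⟩

/-- Second claim in the proof of Theorem 5.2: if `f ∈ S^p_{p−1}(n)` and
`v ↦ v·f(v) ∈ S^p_{p−1}(n)`, then `f` is a single global polynomial of degree at most
`p−1`; in particular the space of all such `f`, viewed as functions on `[0,1]`, has
dimension at most `p`, independently of `n`. -/
theorem stmt15 (p n : ℕ) (hp : 1 ≤ p) (hn : 1 ≤ n) :
    (∀ f : ℝ → ℝ, IsSpline p (p - 1) n f →
      IsSpline p (p - 1) n (fun v => v * f v) →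
      ∃ q : Polynomial ℝ, q.natDegree ≤ p - 1 ∧
        ∀ x ∈ Set.Icc (0 : ℝ) 1, f x = q.eval x) ∧
    Module.rank ℝ
      ↥(Submodule.span ℝ
        {g : ↥(Set.Icc (0 : ℝ) 1) → ℝ |
          ∃ f : ℝ → ℝ,
            (∀ x : ↥(Set.Icc (0 : ℝ) 1), g x = f (x : ℝ)) ∧
            IsSpline p (p - 1) n f ∧
            IsSpline p (p - 1) n (fun v => v * f v)}) ≤ (p : Cardinal) :=
  stmt15_general p n hn
end

section
/- Let p ≥ 1, 1 ≤ p_α ≤ p, r ≥ 0 and n ≥ 1 be integers. Let α ∈ S^{p_α}_r(n) be such that, on each knot interval [i/n,(i+1)/n], the polynomial representing α has degree exactly p_α. Let g ∈ S^p_r(n) be such that the product v ↦ α(v)·g(v) is, on each knot interval, a polynomial of degree at most p. Then g ∈ S^{p−p_α}_r(n). (This is the restriction part of Theorem 5.3: when the gluing coefficient α^{(R)} has exact degree p_α, the transversal derivative data g₁ of C¹ isogeometric functions is constrained to splines of degree p − p_α, reducing the approximation power of the space.) -/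
/-- Restriction part of Theorem 5.3 for the transversal derivative data: if the gluing
coefficient `α ∈ S^{p_α}_r(n)` has exact degree `p_α` on each knot interval, and
`g ∈ S^p_r(n)` is such that the product `α·g` is, on each knot interval, a polynomial of
degree at most `p`, then `g ∈ S^{p−p_α}_r(n)`. -/
theorem stmt17 (p pa r n : ℕ) (hp : 1 ≤ p) (hpa1 : 1 ≤ pa) (hpa2 : pa ≤ p) (hn : 1 ≤ n)
    (α : ℝ → ℝ) (hα : IsSpline pa r n α)
    (hexact : ∀ i : ℕ, i < n → ∀ q : Polynomial ℝ,
      (∀ x ∈ Set.Icc ((i : ℝ) / n) (((i : ℝ) + 1) / n), α x = q.eval x) →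
      q.natDegree = pa)
    (g : ℝ → ℝ) (hg : IsSpline p r n g)
    (hprod : ∀ i : ℕ, i < n →
      ∃ q : Polynomial ℝ, q.natDegree ≤ p ∧
        ∀ x ∈ Set.Icc ((i : ℝ) / n) (((i : ℝ) + 1) / n), α x * g x = q.eval x) :
    IsSpline (p - pa) r n g := by
  refine ⟨hg.1, fun i hi => ?_⟩
  obtain ⟨qg, hqg, hqgeq⟩ := hg.2 i hi
  obtain ⟨q, hq, hqeq⟩ := hprod i hi
  obtain ⟨qa, _, hqaeq⟩ := hα.2 i hi
  have hdeg : qa.natDegree = pa := hexact i hi qa hqaeq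
  have hnpos : (0:ℝ) < n := by positivity
  have hlt : (i:ℝ)/n < ((i:ℝ)+1)/n := by
    apply div_lt_div_of_pos_right (by linarith) hnpos
  have hmul : qa * qg = q := by
    apply Polynomial.eq_of_infinite_eval_eq
    apply Set.Infinite.mono (s := Set.Icc ((i:ℝ)/n) (((i:ℝ)+1)/n))
    · intro x hx
      simp only [Set.mem_setOf_eq, Polynomial.eval_mul]
      rw [← hqgeq x hx, ← hqaeq x hx, hqeq x hx]
    · exact Set.Icc_infinite hlt
  by_cases h0 : qg = 0
  · exact ⟨0, by simp, fun x hx => by rw [hqgeq x hx, h0]⟩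
  · refine ⟨qg, ?_, hqgeq⟩
    have hqa0 : qa ≠ 0 := fun h => by rw [h] at hdeg; simp at hdeg; omega
    have hsum : qa.natDegree + qg.natDegree ≤ p := by
      rw [← Polynomial.natDegree_mul hqa0 h0, hmul]; exact hq
    omega
end

section
/- Let p ≥ 1, 1 ≤ p_β ≤ p, r ≥ 1 and n ≥ 1 be integers. Let β ∈ S^{p_β}_r(n) be such that β(v) ≠ 0 for all v ∈ [0,1] and, on each knot interval [i/n,(i+1)/n], the polynomial representing β has degree exactly p_β. Let g ∈ S^p_r(n) be such that the function v ↦ β(v)·g'(v) belongs to S^p_r(n). Then g ∈ S^{min(p, p−p_β+1)}_{r+1}(n), i.e., g is (r+1) times continuously differentiable on [0,1] and, on each knot interval, g coincides with a polynomial of degree at most min(p, p − p_β + 1). (This is the restriction part of Theorem 5.3 concerning the trace data g₀: when the gluing coefficient β^{(R)} has exact degree p_β ≥ 1, the trace of C¹ isogeometric functions is constrained to smoother splines of reduced degree.) -/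
open Polynomial Set

section Smoothness

variable {s : Set ℝ} {r : ℕ} {β g : ℝ → ℝ}

theorem contDiffOn_succ_of_contDiffOn_mul_derivWithin (hs : UniqueDiffOn ℝ s)
    (hg : DifferentiableOn ℝ g s) (hβ : ContDiffOn ℝ r β s) (hβne : ∀ v ∈ s, β v ≠ 0)
    (hprod : ContDiffOn ℝ r (fun v => β v * derivWithin g s v) s) :
    ContDiffOn ℝ (r + 1) g s := by
  have hderiv : ContDiffOn ℝ r (derivWithin g s) s :=
    (hprod.div hβ hβne).congr fun x hx => by
      rw [Pi.div_apply, mul_div_cancel_left₀ _ (hβne x hx)]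
  exact_mod_cast (contDiffOn_succ_iff_derivWithin hs).2 ⟨hg, by simp, hderiv⟩

end Smoothness

theorem Polynomial.natDegree_le_natDegree_mul_derivative_add_one_sub {R : Type*} [Semiring R]
    [NoZeroDivisors R] [IsAddTorsionFree R] {q₁ : R[X]} (q₂ : R[X])
    (hq₁ : q₁ ≠ 0) : q₂.natDegree ≤ (q₁ * derivative q₂).natDegree + 1 - q₁.natDegree := by
  by_cases hq₂ : derivative q₂ = 0
  · rw [derivative_eq_zero.1 hq₂]
    omega
  · rw [natDegree_mul hq₁ hq₂, natDegree_derivative]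
    omega

theorem derivWithin_eq_eval_derivative_of_eventuallyEq {s : Set ℝ} {x : ℝ} {g : ℝ → ℝ}
    {q : ℝ[X]} (hs : s ∈ nhds x) (hg : g =ᶠ[nhds x] fun y => q.eval y) :
    derivWithin g s x = (derivative q).eval x := by
  rw [derivWithin_of_mem_nhds hs, hg.deriv_eq, Polynomial.deriv]

theorem mul_derivative_eq_of_eqOn_Icc {a b : ℝ} (hab : a < b) {s : Set ℝ} (hs : Icc a b ⊆ s)
    {β g : ℝ → ℝ} {qβ qg q : ℝ[X]} (hβ : ∀ x ∈ Icc a b, β x = qβ.eval x)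
    (hg : ∀ x ∈ Icc a b, g x = qg.eval x)
    (hprod : ∀ x ∈ Icc a b, β x * derivWithin g s x = q.eval x) :
    qβ * derivative qg = q := by
  refine eq_of_infinite_eval_eq _ _ ((Ioo_infinite hab).mono fun x hx => ?_)
  have hIoo : Ioo a b ∈ nhds x := Ioo_mem_nhds hx.1 hx.2
  have hgx : g =ᶠ[nhds x] fun y => qg.eval y :=
    Filter.eventually_of_mem hIoo fun y hy => hg y (Ioo_subset_Icc_self hy)
  have hs_nhds : s ∈ nhds x :=
    Filter.mem_of_superset hIoo (Ioo_subset_Icc_self.trans hs)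
  rw [mem_ofPred_eq, eval_mul, ← derivWithin_eq_eval_derivative_of_eventuallyEq hs_nhds hgx,
    ← hβ x (Ioo_subset_Icc_self hx)]
  exact hprod x (Ioo_subset_Icc_self hx)

section KnotIntervals

variable {i n : ℕ}

theorem knot_lt_knot_succ (hi : i < n) : (i : ℝ) / n < ((i : ℝ) + 1) / n := by
  have hn : (0 : ℝ) < n := by exact_mod_cast (Nat.zero_le i).trans_lt hi
  gcongr
  linarith

theorem Icc_knot_subset_Icc_zero_one (hi : i < n) :
    Icc ((i : ℝ) / n) (((i : ℝ) + 1) / n) ⊆ Icc 0 1 := by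
  have hn : (0 : ℝ) < n := by exact_mod_cast (Nat.zero_le i).trans_lt hi
  have hin : (i : ℝ) + 1 ≤ n := by exact_mod_cast hi
  exact Icc_subset_Icc (by positivity) ((div_le_one hn).2 hin)

end KnotIntervals

theorem stmt18_general (p pb r n : ℕ)
    (hr : 1 ≤ r)
    (β : ℝ → ℝ) (hβ : IsSpline pb r n β)
    (hβne : ∀ v ∈ Set.Icc (0 : ℝ) 1, β v ≠ 0)
    (hexact : ∀ i : ℕ, i < n → ∀ q : Polynomial ℝ,
      (∀ x ∈ Set.Icc ((i : ℝ) / n) (((i : ℝ) + 1) / n), β x = q.eval x) →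
      q.natDegree = pb)
    (g : ℝ → ℝ) (hg : IsSpline p r n g)
    (hprod : IsSpline p r n (fun v => β v * derivWithin g (Set.Icc 0 1) v)) :
    IsSpline (min p (p - pb + 1)) (r + 1) n g := by
  refine ⟨contDiffOn_succ_of_contDiffOn_mul_derivWithin (uniqueDiffOn_Icc one_pos)
    (hg.1.differentiableOn (by exact_mod_cast Nat.one_le_iff_ne_zero.1 hr)) hβ.1 hβne hprod.1,
    fun i hi => ?_⟩
  obtain ⟨qg, hqg_deg, hqg⟩ := hg.2 i hi
  obtain ⟨qβ, -, hqβ⟩ := hβ.2 i hi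
  obtain ⟨q, hq_deg, hq⟩ := hprod.2 i hi
  have hleft : (i : ℝ) / n ∈ Icc ((i : ℝ) / n) (((i : ℝ) + 1) / n) :=
    left_mem_Icc.2 (knot_lt_knot_succ hi).le
  have hqβ0 : qβ ≠ 0 := fun h =>
    hβne _ (Icc_knot_subset_Icc_zero_one hi hleft) (by rw [hqβ _ hleft, h, eval_zero])
  have hpiece : qβ * derivative qg = q :=
    mul_derivative_eq_of_eqOn_Icc (knot_lt_knot_succ hi) (Icc_knot_subset_Icc_zero_one hi)
      hqβ hqg hq
  have hdeg := natDegree_le_natDegree_mul_derivative_add_one_sub qg hqβ0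
  rw [hexact i hi qβ hqβ, hpiece] at hdeg
  exact ⟨qg, by omega, hqg⟩

/-- Restriction part of Theorem 5.3 for the trace data: if the gluing coefficient
`β ∈ S^{p_β}_r(n)` is nonvanishing on `[0,1]` and has exact degree `p_β` on each knot
interval, and `g ∈ S^p_r(n)` is such that `β·g' ∈ S^p_r(n)`, then
`g ∈ S^{min(p, p−p_β+1)}_{r+1}(n)`. -/
theorem stmt18 (p pb r n : ℕ) (hp : 1 ≤ p) (hpb1 : 1 ≤ pb) (hpb2 : pb ≤ p)
    (hr : 1 ≤ r) (hn : 1 ≤ n)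
    (β : ℝ → ℝ) (hβ : IsSpline pb r n β)
    (hβne : ∀ v ∈ Set.Icc (0 : ℝ) 1, β v ≠ 0)
    (hexact : ∀ i : ℕ, i < n → ∀ q : Polynomial ℝ,
      (∀ x ∈ Set.Icc ((i : ℝ) / n) (((i : ℝ) + 1) / n), β x = q.eval x) →
      q.natDegree = pb)
    (g : ℝ → ℝ) (hg : IsSpline p r n g)
    (hprod : IsSpline p r n (fun v => β v * derivWithin g (Set.Icc 0 1) v)) :
    IsSpline (min p (p - pb + 1)) (r + 1) n g :=
  stmt18_general p pb r n hr β hβ hβne hexact g hg hprod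
end

section
/- Let u_L, u_R, τ be vectors in ℝ³ and let P : ℝ³ → ℝ² denote the projection onto the first two coordinates. Assume det[P u_L, P τ] ≠ 0 and det[P u_R, P τ] ≠ 0. If a_L, a_R, b are real numbers satisfying a_R·u_L − a_L·u_R + b·τ = 0 in ℝ³, then there exists γ ∈ ℝ such that a_L = γ·det[P u_L, P τ], a_R = γ·det[P u_R, P τ] and b = γ·det[P u_L, P u_R]. (This is the pointwise form of Proposition 6.2 for surfaces: for surface patches F^{(S)} = (P^{(S)}, F₃^{(S)}) projectable onto the plane, the G¹ gluing coefficients α^{(L)}, α^{(R)}, β are determined, up to a common scalar factor, by the planar projections P^{(S)} alone.) -/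
/-- The projection `P : ℝ³ → ℝ²` onto the first two coordinates. -/
def proj (x : Fin 3 → ℝ) : Fin 2 → ℝ := ![x 0, x 1]

/-- Pointwise form of Proposition 6.2: for projectable surface patches, the G¹ gluing
coefficients are determined, up to a common scalar factor, by the planar projections. -/
theorem stmt19 (uL uR τ : Fin 3 → ℝ)
    (hL : det2 (proj uL) (proj τ) ≠ 0) (hR : det2 (proj uR) (proj τ) ≠ 0)
    (aL aR b : ℝ) (hrel : aR • uL - aL • uR + b • τ = 0) :
    ∃ γ : ℝ, aL = γ * det2 (proj uL) (proj τ) ∧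
      aR = γ * det2 (proj uR) (proj τ) ∧
      b = γ * det2 (proj uL) (proj uR) := by
  have h0 := congrFun hrel 0
  have h1 := congrFun hrel 1
  simp [Pi.sub_apply, Pi.add_apply, Pi.smul_apply, smul_eq_mul] at h0 h1
  simp only [det2, proj, Matrix.cons_val_zero, Matrix.cons_val_one, Matrix.head_cons] at *
  refine ⟨aL / (uL 0 * τ 1 - uL 1 * τ 0), ?_, ?_, ?_⟩
  · field_simp
  · field_simp
    linear_combination τ 1 * h0 - τ 0 * h1
  · field_simp
    linear_combination uL 0 * h1 - uL 1 * h0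
end
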